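/- Let n ≥ 2, let E_1, …, E_n be Banach spaces over 𝕂 (= ℝ or ℂ), let A : E_1 × ⋯ × E_n → 𝕂 be a continuous n-linear form, and let A_{n−1} : E_1 × ⋯ × E_{n−1} → E_n' be the associated (n−1)-linear map defined by A_{n−1}(x^1,…,x^{n−1})(x^n) = A(x^1,…,x^n). If A is absolutely (1;2,…,2)-summing, then A_{n−1} is almost summing. -/

import Mathlib

/-!
Evaluating `A` with last argument `z_j` shows that the functionals `λ_j := B (x_j)` satisfy
`∑_j |λ_j (z_j)| ≤ C ∏_i ‖x^i‖_w · ‖z‖_w` for every family `z`. Any such family of functionals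
has Rademacher norm at most `C ∏_i ‖x^i‖_w`: put `S_ε := ∑_j ε_j λ_j`, pick unit vectors `y_ε`
almost norming `S_ε`, and test on `z_j := 𝔼_ε [ε_j ‖S_ε‖ y_ε]`. Then `∑_j λ_j (z_j) =
𝔼_ε [‖S_ε‖ S_ε (y_ε)]` is almost `‖λ‖_Rad²`, while Bessel's inequality for the orthonormal
functions `ε ↦ ε_j` gives `‖z‖_w ≤ (𝔼_ε ‖S_ε‖²)^(1/2) = ‖λ‖_Rad`.
-/

open scoped BigOperators NNReal ENNReal

/-- The weak `ℓ_r` norm of a finite family `(x_j)` in a normed space: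
`sup_{‖φ‖ ≤ 1} (∑_j ‖φ(x_j)‖^r)^(1/r)`. -/
noncomputable def weakNorm (𝕜 : Type*) [RCLike 𝕜] {E : Type*} [NormedAddCommGroup E]
    [NormedSpace 𝕜 E] (r : ℝ) {m : ℕ} (x : Fin m → E) : ℝ :=
  ⨆ φ : {φ : E →L[𝕜] 𝕜 // ‖φ‖ ≤ 1}, (∑ j, ‖φ.1 (x j)‖ ^ r) ^ (1 / r)

/-- The Rademacher norm of a finite family `(x_j)_{j=1}^m` in a normed space:
`(2^{-m} ∑_{ε ∈ {-1,1}^m} ‖∑_j ε_j x_j‖²)^{1/2}`. -/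
noncomputable def radNorm {E : Type*} [NormedAddCommGroup E] {m : ℕ} (x : Fin m → E) : ℝ :=
  ((∑ ε : Fin m → Bool, ‖∑ j, (if ε j then x j else -x j)‖ ^ 2) / (2 : ℝ) ^ m) ^ ((1 : ℝ) / 2)

open Finset
open scoped InnerProductSpace

/-- `rademacherAvg 𝕜 w j = 𝔼_ε [ε_j w_ε]` for `ε` uniform on `{-1, 1}^m`, encoded as
`Fin m → Bool`. -/
noncomputable def rademacherAvg (𝕜 : Type*) [Field 𝕜] {F : Type*} [AddCommGroup F] [Module 𝕜 F]
    {m : ℕ} (w : (Fin m → Bool) → F) (j : Fin m) : F :=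
  ((2 : 𝕜) ^ m)⁻¹ • ∑ ε, if ε j then w ε else -w ε

section Rademacher

variable {𝕜 : Type*} [RCLike 𝕜] {F G : Type*} [NormedAddCommGroup F] [NormedSpace 𝕜 F]
  [NormedAddCommGroup G] [NormedSpace 𝕜 G] {m : ℕ}

theorem sum_sign_mul_sign {R : Type*} [CommRing R] (j k : Fin m) :
    ∑ ε : Fin m → Bool, (if ε j then 1 else -1 : R) * (if ε k then 1 else -1) =
      if j = k then 2 ^ m else 0 := by
  split_ifs with hjk
  · subst hjk
    have hsq (ε : Fin m → Bool) : (if ε j then 1 else -1 : R) * (if ε j then 1 else -1) = 1 := by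
      split_ifs <;> simp
    simp [hsq]
  · refine sum_ninvolution (fun ε => Function.update ε j !(ε j)) (fun ε => ?_) (fun ε _ h => ?_)
      (fun _ => mem_univ _) (fun ε => by simp)
    · rw [Function.update_self, Function.update_of_ne (Ne.symm hjk)]
      cases ε j <;> cases ε k <;> simp
    · simpa using congrFun h j

theorem ofReal_inv_sqrt_two_pow_mul_self :
    ((√(2 ^ m) : ℝ) : 𝕜)⁻¹ * ((√(2 ^ m) : ℝ) : 𝕜)⁻¹ = ((2 : 𝕜) ^ m)⁻¹ := by
  rw [← mul_inv, ← RCLike.ofReal_mul, Real.mul_self_sqrt (by positivity)]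
  push_cast; rfl

theorem orthonormal_rademacher :
    Orthonormal 𝕜 fun j : Fin m => WithLp.toLp 2 fun ε : Fin m → Bool =>
      ((√(2 ^ m))⁻¹ : 𝕜) * if ε j then 1 else -1 := by
  refine orthonormal_iff_ite.2 fun i j => ?_
  have hconj (ε : Fin m → Bool) :
      (starRingEnd 𝕜) (((√(2 ^ m) : ℝ) : 𝕜)⁻¹ * if ε i then 1 else -1) =
        ((√(2 ^ m) : ℝ) : 𝕜)⁻¹ * if ε i then 1 else -1 := by
    split_ifs <;> simp
  simp only [PiLp.inner_apply, RCLike.inner_apply, hconj]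
  calc _ = ((√(2 ^ m) : ℝ) : 𝕜)⁻¹ * ((√(2 ^ m) : ℝ) : 𝕜)⁻¹ *
        ∑ ε : Fin m → Bool, (if ε i then 1 else -1 : 𝕜) * (if ε j then 1 else -1) := by
        rw [mul_sum]; exact sum_congr rfl fun ε _ => by ring
    _ = _ := by
        rw [sum_sign_mul_sign, ofReal_inv_sqrt_two_pow_mul_self]
        split_ifs <;> simp

theorem sum_norm_sq_rademacherAvg_le (a : (Fin m → Bool) → 𝕜) :
    ∑ j, ‖rademacherAvg 𝕜 a j‖ ^ 2 ≤ (∑ ε, ‖a ε‖ ^ 2) / 2 ^ m := by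
  have hinner (j : Fin m) : rademacherAvg 𝕜 a j = ((√(2 ^ m))⁻¹ : 𝕜) *
      ⟪WithLp.toLp 2 fun ε : Fin m → Bool => ((√(2 ^ m))⁻¹ : 𝕜) * if ε j then 1 else -1,
        WithLp.toLp 2 a⟫_𝕜 := by
    simp only [rademacherAvg, PiLp.inner_apply, smul_eq_mul, mul_sum, RCLike.inner_apply, map_mul]
    refine sum_congr rfl fun ε _ => ?_
    rw [RCLike.conj_inv, RCLike.conj_ofReal, ← ofReal_inv_sqrt_two_pow_mul_self]
    split_ifs <;> simp only [map_one, map_neg] <;> ring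
  have hbessel := orthonormal_rademacher.sum_inner_products_le (s := univ) (WithLp.toLp 2 a)
  rw [EuclideanSpace.norm_sq_eq] at hbessel
  have hnorm (x : 𝕜) : ‖((√(2 ^ m) : ℝ) : 𝕜)⁻¹ * x‖ ^ 2 = ‖x‖ ^ 2 / 2 ^ m := by
    rw [norm_mul, mul_pow, norm_inv, RCLike.norm_ofReal, abs_of_nonneg (Real.sqrt_nonneg _),
      inv_pow, Real.sq_sqrt (by positivity), inv_mul_eq_div]
  simp only [hinner, hnorm, ← sum_div]
  gcongr

theorem weakNorm_nonneg (r : ℝ) (x : Fin m → F) : 0 ≤ weakNorm 𝕜 r x :=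
  Real.iSup_nonneg fun _ =>
    Real.rpow_nonneg (sum_nonneg fun _ _ => Real.rpow_nonneg (norm_nonneg _) _) _

theorem weakNorm_two_le {x : Fin m → F} {M : ℝ} (hM : 0 ≤ M)
    (h : ∀ φ : F →L[𝕜] 𝕜, ‖φ‖ ≤ 1 → ∑ j, ‖φ (x j)‖ ^ 2 ≤ M ^ 2) : weakNorm 𝕜 2 x ≤ M := by
  refine Real.iSup_le (fun φ => ?_) hM
  rw [← Real.sqrt_eq_rpow, ← Real.sqrt_sq hM]
  simp only [Real.rpow_two]
  exact Real.sqrt_le_sqrt (h φ.1 φ.2)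

theorem map_rademacherAvg {M : Type*} [FunLike M F G] [LinearMapClass M 𝕜 F G] (f : M)
    (w : (Fin m → Bool) → F) (j : Fin m) :
    f (rademacherAvg 𝕜 w j) = rademacherAvg 𝕜 (fun ε => f (w ε)) j := by
  simp [rademacherAvg, map_sum, apply_ite]

theorem weakNorm_two_rademacherAvg_le (w : (Fin m → Bool) → F) :
    weakNorm 𝕜 2 (rademacherAvg 𝕜 w) ≤ √((∑ ε, ‖w ε‖ ^ 2) / 2 ^ m) := by
  refine weakNorm_two_le (Real.sqrt_nonneg _) fun φ hφ => ?_
  rw [Real.sq_sqrt (by positivity)]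
  calc ∑ j, ‖φ (rademacherAvg 𝕜 w j)‖ ^ 2 = ∑ j, ‖rademacherAvg 𝕜 (fun ε => φ (w ε)) j‖ ^ 2 := by
        simp only [map_rademacherAvg]
    _ ≤ (∑ ε, ‖φ (w ε)‖ ^ 2) / 2 ^ m := sum_norm_sq_rademacherAvg_le _
    _ ≤ (∑ ε, ‖w ε‖ ^ 2) / 2 ^ m := by
        gcongr with ε
        simpa using φ.le_of_opNorm_le hφ (w ε)

theorem sum_apply_rademacherAvg (f : Fin m → F →L[𝕜] G) (w : (Fin m → Bool) → F) :
    ∑ j, f j (rademacherAvg 𝕜 w j) =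
      ((2 : 𝕜) ^ m)⁻¹ • ∑ ε : Fin m → Bool, (∑ j, if ε j then f j else -f j) (w ε) := by
  simp only [rademacherAvg, map_smul, map_sum, ← smul_sum, FunLike.coe_sum, Finset.sum_apply]
  rw [sum_comm]
  refine congrArg _ (sum_congr rfl fun ε _ => sum_congr rfl fun j _ => ?_)
  split_ifs <;> simp

theorem ContinuousLinearMap.exists_norm_le_one_mul_opNorm_le_re_apply (f : F →L[𝕜] 𝕜) {c : ℝ}
    (hc : c < 1) : ∃ y, ‖y‖ ≤ 1 ∧ c * ‖f‖ ≤ RCLike.re (f y) := by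
  rcases (norm_nonneg f).eq_or_lt with hf | hf
  · exact ⟨0, by simp, by simp [← hf]⟩
  obtain ⟨y, hy, hfy⟩ := f.exists_lt_apply_of_lt_opNorm (mul_lt_of_lt_one_left hf hc)
  obtain ⟨u, hu, hfu⟩ := RCLike.exists_norm_eq_mul_self (f y)
  refine ⟨u • y, by simpa [norm_smul, hu] using hy.le, ?_⟩
  rw [map_smul, smul_eq_mul, ← hfu, RCLike.ofReal_re]
  exact hfy.le

theorem radNorm_le_of_forall_sum_norm_apply_le (f : Fin m → F →L[𝕜] 𝕜) {T : ℝ} (hT : 0 ≤ T)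
    (h : ∀ z : Fin m → F, ∑ j, ‖f j (z j)‖ ≤ T * weakNorm 𝕜 2 z) : radNorm f ≤ T := by
  set S : (Fin m → Bool) → F →L[𝕜] 𝕜 := fun ε => ∑ j, if ε j then f j else -f j
  have hR : radNorm f = √((∑ ε, ‖S ε‖ ^ 2) / 2 ^ m) := (Real.sqrt_eq_rpow _).symm
  have key (c : ℝ) (hc : c < 1) : c * radNorm f ^ 2 ≤ T * radNorm f := by
    choose y hy hSy using fun ε => (S ε).exists_norm_le_one_mul_opNorm_le_re_apply hc
    set w : (Fin m → Bool) → F := fun ε => (‖S ε‖ : 𝕜) • y ε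
    have hw (ε : Fin m → Bool) : ‖w ε‖ ≤ ‖S ε‖ := by
      simpa [w, norm_smul] using mul_le_of_le_one_right (norm_nonneg _) (hy ε)
    have hweak : weakNorm 𝕜 2 (rademacherAvg 𝕜 w) ≤ radNorm f :=
      (weakNorm_two_rademacherAvg_le w).trans (hR ▸ by gcongr with ε; exact hw ε)
    calc c * radNorm f ^ 2 = (∑ ε, ‖S ε‖ * (c * ‖S ε‖)) / 2 ^ m := by
          rw [hR, Real.sq_sqrt (by positivity), mul_div_assoc', mul_sum]
          congr 1; exact sum_congr rfl fun ε _ => by ring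
      _ ≤ (∑ ε, ‖S ε‖ * RCLike.re (S ε (y ε))) / 2 ^ m := by gcongr with ε; exact hSy ε
      _ = RCLike.re (∑ j, f j (rademacherAvg 𝕜 w j)) := by
          have h2 : ((2 : 𝕜) ^ m)⁻¹ = (((2 : ℝ) ^ m)⁻¹ : ℝ) := by push_cast; rfl
          rw [sum_apply_rademacherAvg, smul_eq_mul, h2, RCLike.re_ofReal_mul, map_sum,
            div_eq_inv_mul]
          simp only [w, map_smul, smul_eq_mul, RCLike.re_ofReal_mul]
          rfl
      _ ≤ ∑ j, ‖f j (rademacherAvg 𝕜 w j)‖ := (RCLike.re_le_norm _).trans (norm_sum_le _ _)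
      _ ≤ T * weakNorm 𝕜 2 (rademacherAvg 𝕜 w) := h _
      _ ≤ T * radNorm f := by gcongr
  have hsq : radNorm f ^ 2 ≤ T * radNorm f :=
    le_of_tendsto (((continuous_mul_const _).tendsto' 1 _ (one_mul _)).mono_left
      nhdsWithin_le_nhds) (eventually_nhdsWithin_of_forall (s := Set.Iio 1) key)
  have hR0 : 0 ≤ radNorm f := hR ▸ Real.sqrt_nonneg _
  nlinarith

end Rademacher

theorem summing_implies_associated_almost_summing_general {𝕜 : Type*} [RCLike 𝕜] {n : ℕ}
    (E : Fin (n + 1) → Type*) [∀ i, NormedAddCommGroup (E i)] [∀ i, NormedSpace 𝕜 (E i)]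
    (A : ContinuousMultilinearMap 𝕜 E 𝕜)
    (B : ContinuousMultilinearMap 𝕜 (fun i : Fin n => E i.castSucc)
      (E (Fin.last n) →L[𝕜] 𝕜))
    (hAB : ∀ (v : ∀ i : Fin n, E i.castSucc) (y : E (Fin.last n)), B v y = A (Fin.snoc v y))
    (hA : ∃ C > 0, ∀ (m : ℕ) (x : ∀ i, Fin m → E i),
      ∑ j, ‖A (fun i => x i j)‖ ≤ C * ∏ i, weakNorm 𝕜 2 (x i)) :
    ∃ C > 0, ∀ (m : ℕ) (x : ∀ i : Fin n, Fin m → E i.castSucc),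
      radNorm (fun j => B (fun i => x i j)) ≤ C * ∏ i, weakNorm 𝕜 2 (x i) := by
  obtain ⟨C, hC, hA⟩ := hA
  refine ⟨C, hC, fun m x => radNorm_le_of_forall_sum_norm_apply_le _
    (mul_nonneg hC.le (prod_nonneg fun i _ => weakNorm_nonneg 2 (x i))) fun z => ?_⟩
  let X : ∀ i, Fin m → E i := Fin.snoc x z
  have hX (j : Fin m) : (fun i => X i j) = Fin.snoc (fun i => x i j) (z j) := by
    funext i
    refine Fin.lastCases ?_ (fun k => ?_) i <;> simp [X]
  calc ∑ j, ‖B (fun i => x i j) (z j)‖ = ∑ j, ‖A (fun i => X i j)‖ := by simp only [hAB, hX]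
    _ ≤ C * ∏ i, weakNorm 𝕜 2 (X i) := hA m X
    _ = C * (∏ i, weakNorm 𝕜 2 (x i)) * weakNorm 𝕜 2 z := by
        simp [X, Fin.prod_univ_castSucc, mul_assoc]

/-- If a continuous `n`-linear form `A` (here with `n + 1` arguments, `n ≥ 1`) is absolutely
`(1; 2, …, 2)`-summing, then the associated `n`-linear map `A_{n}` into the dual of the last
space (characterized by `B v y = A (v, y)`) is almost summing. -/
theorem summing_implies_associated_almost_summing {𝕜 : Type*} [RCLike 𝕜] {n : ℕ} (hn : 1 ≤ n)
    (E : Fin (n + 1) → Type*) [∀ i, NormedAddCommGroup (E i)] [∀ i, NormedSpace 𝕜 (E i)]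
    [∀ i, CompleteSpace (E i)]
    (A : ContinuousMultilinearMap 𝕜 E 𝕜)
    (B : ContinuousMultilinearMap 𝕜 (fun i : Fin n => E i.castSucc)
      (E (Fin.last n) →L[𝕜] 𝕜))
    (hAB : ∀ (v : ∀ i : Fin n, E i.castSucc) (y : E (Fin.last n)), B v y = A (Fin.snoc v y))
    (hA : ∃ C > 0, ∀ (m : ℕ) (x : ∀ i, Fin m → E i),
      ∑ j, ‖A (fun i => x i j)‖ ≤ C * ∏ i, weakNorm 𝕜 2 (x i)) :
    ∃ C > 0, ∀ (m : ℕ) (x : ∀ i : Fin n, Fin m → E i.castSucc),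
      radNorm (fun j => B (fun i => x i j)) ≤ C * ∏ i, weakNorm 𝕜 2 (x i) :=
  summing_implies_associated_almost_summing_general E A B hAB hA
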